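/- Let T ∈ ℝ, δ ∈ (0,∞), and c ∈ 𝒢_{T,δ}. Define s(t) := B(t)/A(t) for t ≥ T. Then: (a) s(t) > 0 for every t ≥ T; (b) s is differentiable on (T, ∞) with s'(t) = (A(t)² − c(t)e^{−t}B(t))/A(t)², and 0 < s'(t) < 1 for every t ∈ (T, ∞); (c) s(t) → +∞ as t → +∞. -/

import Mathlib

open MeasureTheory Filter Set

/-- `Afun T δ c t = (1/δ)·c(T)e^{-T} + ∫_T^t c(t₁)e^{-t₁} dt₁`. -/
noncomputable def Afun (T δ : ℝ) (c : ℝ → ℝ) (t : ℝ) : ℝ :=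
  (1 / δ) * c T * Real.exp (-T) + ∫ t₁ in T..t, c t₁ * Real.exp (-t₁)

/-- `Bfun T δ c t = ∫_T^t Afun T δ c t₂ dt₂ + (1/δ²)·c(T)e^{-T}`. -/
noncomputable def Bfun (T δ : ℝ) (c : ℝ → ℝ) (t : ℝ) : ℝ :=
  (∫ t₂ in T..t, Afun T δ c t₂) + (1 / δ ^ 2) * c T * Real.exp (-T)

/-- The class `𝒢_{T,δ}` of Guan–Zhou: continuous positive functions `c` on `[T,∞)` with
`∫_T^∞ c(t)e^{-t} dt < ∞` satisfying the key inequality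
`A(t)² > c(t)e^{-t}·B(t)` for every `t > T`. -/
def GTdelta (T δ : ℝ) (c : ℝ → ℝ) : Prop :=
  ContinuousOn c (Set.Ici T) ∧ (∀ t ∈ Set.Ici T, 0 < c t) ∧
  MeasureTheory.IntegrableOn (fun t => c t * Real.exp (-t)) (Set.Ici T) ∧
  ∀ t, T < t → (Afun T δ c t) ^ 2 > c t * Real.exp (-t) * Bfun T δ c t

/-! `A' = c(t)e^{-t} ≥ 0` and `c(t)e^{-t}` is integrable, so `A(T) ≤ A ≤ sup A < ∞`, while
`B' = A ≥ A(T) > 0`, so `B` grows at least linearly. The quotient rule gives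
`s' = (A² - c(t)e^{-t}B)/A²`, which lies in `(0,1)` exactly by the defining inequality of
`𝒢_{T,δ}` and positivity of `c(t)e^{-t}B`; and `s ≥ B / sup A → ∞`. -/

theorem ContinuousOn.continuousOn_primitive_Ici {E : Type*} [NormedAddCommGroup E]
    [NormedSpace ℝ E] {f : ℝ → E} {a : ℝ}
    (hf : ContinuousOn f (Ici a)) : ContinuousOn (fun x => ∫ u in a..x, f u) (Ici a) := by
  intro x hx
  have hax : a ≤ x + 1 := by linarith [mem_Ici.1 hx]
  have hint : IntegrableOn f (uIcc a (x + 1)) := by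
    rw [uIcc_of_le hax]
    exact (hf.mono Icc_subset_Ici_self).integrableOn_Icc
  have hmem : x ∈ uIcc a (x + 1) := by
    rw [uIcc_of_le hax]
    exact ⟨hx, by linarith⟩
  refine (intervalIntegral.continuousOn_primitive_interval hint x hmem).mono_of_mem_nhdsWithin ?_
  rw [uIcc_of_le hax]
  exact mem_nhdsWithin_iff_exists_mem_nhds_inter.2
    ⟨Iio (x + 1), Iio_mem_nhds (by linarith), fun y hy => ⟨hy.2, hy.1.le⟩⟩

theorem ContinuousOn.hasDerivAt_primitive_of_Ici {E : Type*} [NormedAddCommGroup E]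
    [NormedSpace ℝ E] [CompleteSpace E] {f : ℝ → E} {a x : ℝ}
    (hf : ContinuousOn f (Ici a)) (hx : a < x) :
    HasDerivAt (fun y => ∫ u in a..y, f u) (f x) x :=
  intervalIntegral.integral_hasDerivAt_right
    ((hf.mono Icc_subset_Ici_self).intervalIntegrable_of_Icc hx.le)
    ((hf.mono Ioi_subset_Ici_self).stronglyMeasurableAtFilter isOpen_Ioi x hx)
    (hf.continuousAt (Ici_mem_nhds hx))

theorem Filter.Tendsto.atTop_div_of_pos_of_le {α : Type*} {l : Filter α} {f g : α → ℝ} {C : ℝ}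
    (hf : Tendsto f l atTop) (hC : 0 < C) (hg : ∀ᶠ x in l, 0 < g x ∧ g x ≤ C) :
    Tendsto (fun x => f x / g x) l atTop := by
  refine tendsto_atTop_mono' l ?_ (hf.atTop_div_const hC)
  filter_upwards [hg, hf.eventually_ge_atTop 0] with x ⟨hg0, hgC⟩ hf0
  exact div_le_div_of_nonneg_left hf0 hg0 hgC

section GTdelta

variable {T δ : ℝ} {c : ℝ → ℝ}

theorem continuousOn_mul_exp_neg (hc : ContinuousOn c (Ici T)) :
    ContinuousOn (fun t => c t * Real.exp (-t)) (Ici T) :=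
  hc.mul (Real.continuous_exp.comp continuous_neg).continuousOn

theorem le_Afun (hc : ∀ t ∈ Ici T, 0 ≤ c t) {t : ℝ} (ht : T ≤ t) :
    1 / δ * c T * Real.exp (-T) ≤ Afun T δ c t :=
  le_add_of_nonneg_right <| intervalIntegral.integral_nonneg ht fun u hu =>
    mul_nonneg (hc u hu.1) (Real.exp_pos _).le

theorem Afun_pos (hδ : 0 < δ) (hc : ∀ t ∈ Ici T, 0 < c t) {t : ℝ} (ht : T ≤ t) :
    0 < Afun T δ c t := by
  have hcT := hc T self_mem_Ici
  exact (by positivity : (0 : ℝ) < 1 / δ * c T * Real.exp (-T)).trans_le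
    (le_Afun (fun u hu => (hc u hu).le) ht)

theorem Afun_le_add_integral_Ici (hc : ∀ t ∈ Ici T, 0 ≤ c t)
    (hint : IntegrableOn (fun t => c t * Real.exp (-t)) (Ici T)) {t : ℝ} (ht : T ≤ t) :
    Afun T δ c t ≤ 1 / δ * c T * Real.exp (-T) + ∫ u in Ici T, c u * Real.exp (-u) := by
  refine (add_le_add_iff_left _).2 ?_
  rw [intervalIntegral.integral_of_le ht]
  refine setIntegral_mono_set hint ?_ (Eventually.of_forall fun u hu => le_of_lt hu.1)
  exact (ae_restrict_iff' measurableSet_Ici).2 <| Eventually.of_forall fun u hu =>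
    mul_nonneg (hc u hu) (Real.exp_pos _).le

theorem continuousOn_Afun (hc : ContinuousOn c (Ici T)) : ContinuousOn (Afun T δ c) (Ici T) :=
  continuousOn_const.add (continuousOn_mul_exp_neg hc).continuousOn_primitive_Ici

theorem hasDerivAt_Afun (hc : ContinuousOn c (Ici T)) {t : ℝ} (ht : T < t) :
    HasDerivAt (Afun T δ c) (c t * Real.exp (-t)) t :=
  ((continuousOn_mul_exp_neg hc).hasDerivAt_primitive_of_Ici ht).const_add _

theorem hasDerivAt_Bfun (hc : ContinuousOn c (Ici T)) {t : ℝ} (ht : T < t) :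
    HasDerivAt (Bfun T δ c) (Afun T δ c t) t :=
  ((continuousOn_Afun hc).hasDerivAt_primitive_of_Ici ht).add_const _

theorem Bfun_pos (hδ : 0 < δ) (hc : ∀ t ∈ Ici T, 0 < c t) {t : ℝ} (ht : T ≤ t) :
    0 < Bfun T δ c t := by
  have hcT := hc T self_mem_Ici
  have hint : 0 ≤ ∫ u in T..t, Afun T δ c u :=
    intervalIntegral.integral_nonneg ht fun u hu => (Afun_pos hδ hc hu.1).le
  exact add_pos_of_nonneg_of_pos hint (by positivity)

theorem le_Bfun (hcont : ContinuousOn c (Ici T)) (hc : ∀ t ∈ Ici T, 0 ≤ c t) {t : ℝ}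
    (ht : T ≤ t) :
    1 / δ * c T * Real.exp (-T) * (t - T) + 1 / δ ^ 2 * c T * Real.exp (-T) ≤ Bfun T δ c t := by
  refine (add_le_add_iff_right _).2 ?_
  have hmono := intervalIntegral.integral_mono_on ht (intervalIntegrable_const (μ := volume))
    (((continuousOn_Afun hcont).mono Icc_subset_Ici_self).intervalIntegrable_of_Icc ht)
    fun u hu => le_Afun (δ := δ) hc hu.1
  rwa [intervalIntegral.integral_const, smul_eq_mul, mul_comm] at hmono

theorem tendsto_Bfun_atTop (hδ : 0 < δ) (hcont : ContinuousOn c (Ici T))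
    (hc : ∀ t ∈ Ici T, 0 < c t) : Tendsto (Bfun T δ c) atTop atTop := by
  have hcT := hc T self_mem_Ici
  have hlin : Tendsto (fun t => 1 / δ * c T * Real.exp (-T) * (t - T)
      + 1 / δ ^ 2 * c T * Real.exp (-T)) atTop atTop :=
    tendsto_atTop_add_const_right _ _ <|
      (tendsto_atTop_add_const_right _ _ tendsto_id).const_mul_atTop (by positivity)
  refine tendsto_atTop_mono' atTop ?_ hlin
  filter_upwards [eventually_ge_atTop T] with t ht
  exact le_Bfun hcont (fun u hu => (hc u hu).le) ht

theorem hasDerivAt_Bfun_div_Afun (hδ : 0 < δ) (hcont : ContinuousOn c (Ici T))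
    (hc : ∀ t ∈ Ici T, 0 < c t) {t : ℝ} (ht : T < t) :
    HasDerivAt (fun x => Bfun T δ c x / Afun T δ c x)
      ((Afun T δ c t ^ 2 - c t * Real.exp (-t) * Bfun T δ c t) / Afun T δ c t ^ 2) t :=
  ((hasDerivAt_Bfun hcont ht).div (hasDerivAt_Afun hcont ht)
    (Afun_pos hδ hc ht.le).ne').congr_deriv (by ring)

end GTdelta

/-- **Properties of `s(t) = B(t)/A(t)` for `c ∈ 𝒢_{T,δ}`:**
(a) `s(t) > 0` on `[T,∞)`; (b) `s` is differentiable on `(T,∞)` with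
`s'(t) = (A(t)² − c(t)e^{−t}B(t))/A(t)²` and `0 < s'(t) < 1` there;
(c) `s(t) → +∞` as `t → +∞`. -/
theorem sfun_properties (T δ : ℝ) (hδ : 0 < δ) (c : ℝ → ℝ) (hc : GTdelta T δ c) :
    (∀ t, T ≤ t → 0 < Bfun T δ c t / Afun T δ c t) ∧
    (∀ t, T < t →
      HasDerivAt (fun x => Bfun T δ c x / Afun T δ c x)
        (((Afun T δ c t) ^ 2 - c t * Real.exp (-t) * Bfun T δ c t) / (Afun T δ c t) ^ 2) t ∧
      0 < ((Afun T δ c t) ^ 2 - c t * Real.exp (-t) * Bfun T δ c t) / (Afun T δ c t) ^ 2 ∧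
      ((Afun T δ c t) ^ 2 - c t * Real.exp (-t) * Bfun T δ c t) / (Afun T δ c t) ^ 2 < 1) ∧
    Tendsto (fun t => Bfun T δ c t / Afun T δ c t) atTop atTop := by
  obtain ⟨hcont, hpos, hint, hkey⟩ := hc
  have hnonneg : ∀ t ∈ Ici T, 0 ≤ c t := fun t ht => (hpos t ht).le
  refine ⟨fun t ht => div_pos (Bfun_pos hδ hpos ht) (Afun_pos hδ hpos ht), fun t ht => ?_, ?_⟩
  · have hA := Afun_pos hδ hpos ht.le
    have hcB : 0 < c t * Real.exp (-t) * Bfun T δ c t :=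
      mul_pos (mul_pos (hpos t ht.le) (Real.exp_pos _)) (Bfun_pos hδ hpos ht.le)
    refine ⟨hasDerivAt_Bfun_div_Afun hδ hcont hpos ht,
      div_pos (sub_pos.2 (hkey t ht)) (by positivity), ?_⟩
    rw [div_lt_one (by positivity)]
    exact sub_lt_self _ hcB
  · have hbound : 0 < 1 / δ * c T * Real.exp (-T) + ∫ u in Ici T, c u * Real.exp (-u) :=
      (Afun_pos hδ hpos le_rfl).trans_le (Afun_le_add_integral_Ici hnonneg hint le_rfl)
    refine (tendsto_Bfun_atTop hδ hcont hpos).atTop_div_of_pos_of_le hbound ?_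
    filter_upwards [eventually_ge_atTop T] with t ht
    exact ⟨Afun_pos hδ hpos ht, Afun_le_add_integral_Ici hnonneg hint ht⟩
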